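/- Any language class containing all finite languages and at least one infinite language L∞ is not identifiable in the limit from positive examples: for every learner there exists a language in the class and a positive presentation of it on which the learner changes its mind infinitely often or converges to a wrong hypothesis. -/

import Mathlib

/-!
Either some finite sequence `σ` locks the learner onto `L∞`, i.e. every continuation of `σ` by
elements of `L∞` makes it guess `L∞`; then `σ` followed forever by one element of `L∞` presents a
finite language, on which the learner converges to `L∞`. Or every `σ` has a continuation inside
`L∞` that moves the learner off `L∞`; then alternately appending such continuations and the next
element of an enumeration of `L∞` builds a presentation of `L∞` on which the learner is wrong
infinitely often.
-/

section ListSeq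

variable {α : Type*}

theorem map_range_length_of_isPrefix {E : ℕ → α} {σ l : List α}
    (hl : (List.range l.length).map E = l) (hσ : σ <+: l) :
    (List.range σ.length).map E = σ := by
  obtain ⟨t, rfl⟩ := hσ
  have := congrArg (List.take σ.length) hl
  rwa [← List.map_take, List.take_range, List.take_left, List.length_append,
    min_eq_left (Nat.le_add_right _ _)] at this

theorem map_range_getD_add (σ : List α) (x : α) (k : ℕ) :
    (List.range (σ.length + k)).map (fun n => σ.getD n x) = σ ++ List.replicate k x := by
  apply List.ext_getElem (by simp)
  intro i _ hi
  rw [List.getElem_map, List.getElem_range, ← List.getD_eq_getElem _ x]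
  rcases lt_or_ge i σ.length with h | h
  · rw [List.getD_append _ _ _ _ h]
  · rw [List.getD_append_right _ _ _ _ h, List.getD_eq_default _ _ h,
      List.getD_replicate _ (by simp at hi; omega)]

theorem range_getD (σ : List α) (x : α) :
    Set.range (fun n => σ.getD n x) = insert x {y | y ∈ σ} := by
  ext y
  constructor
  · rintro ⟨n, rfl⟩
    rcases lt_or_ge n σ.length with h | h
    · right
      show σ.getD n x ∈ σ
      rw [List.getD_eq_getElem _ _ h]
      exact List.getElem_mem h
    · exact Or.inl (List.getD_eq_default _ _ h)
  · rintro (rfl | hy)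
    · exact ⟨σ.length, List.getD_eq_default _ _ le_rfl⟩
    · obtain ⟨n, hn, rfl⟩ := List.getElem_of_mem hy
      exact ⟨n, List.getD_eq_getElem _ _ hn⟩

theorem isPrefix_of_le_of_isPrefix_succ {s : ℕ → List α} (hs : ∀ k, s k <+: s (k + 1))
    {j k : ℕ} (hjk : j ≤ k) : s j <+: s k := by
  induction k, hjk using Nat.le_induction with
  | base => exact List.prefix_refl _
  | succ k _ ih => exact ih.trans (hs k)

theorem exists_seq_of_isPrefix_succ (s : ℕ → List α) (hs : ∀ k, s k <+: s (k + 1))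
    (hlen : ∀ n, ∃ k, n < (s k).length) :
    ∃ E : ℕ → α, (∀ k, (List.range (s k).length).map E = s k) ∧
      Set.range E = {x | ∃ k, x ∈ s k} := by
  choose K hK using hlen
  have hE : ∀ k n (hn : n < (s k).length), (s (K n))[n]'(hK n) = (s k)[n] := by
    intro k n hn
    rcases le_total (K n) k with h | h
    · exact (isPrefix_of_le_of_isPrefix_succ hs h).getElem _
    · exact ((isPrefix_of_le_of_isPrefix_succ hs h).getElem _).symm
  refine ⟨fun n => (s (K n))[n]'(hK n), fun k => ?_, ?_⟩
  · exact List.ext_getElem (by simp) fun n h _ => by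
      simpa using hE k n (by simpa using h)
  · ext x
    constructor
    · rintro ⟨n, rfl⟩
      exact ⟨K n, List.getElem_mem _⟩
    · rintro ⟨k, hx⟩
      obtain ⟨n, hn, rfl⟩ := List.getElem_of_mem hx
      exact ⟨n, hE k n hn⟩

end ListSeq

section Gold

variable {X : Type*}

def Identifies (learner : List X → Set X) (E : ℕ → X) (L : Set X) : Prop :=
  ∃ N : ℕ, ∀ n ≥ N, learner ((List.range n).map E) = L

/-- Unlike the usual notion of Blum and Blum, `σ` itself need not be drawn from `L`. -/
def IsLockingSeq (learner : List X → Set X) (L : Set X) (σ : List X) : Prop :=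
  ∀ τ : List X, (∀ x ∈ τ, x ∈ L) → learner (σ ++ τ) = L

theorem IsLockingSeq.not_identifies {learner : List X → Set X} {L : Set X} {σ : List X}
    (hσ : IsLockingSeq learner L σ) (hL : L.Infinite) {x : X} (hx : x ∈ L) :
    ¬ Identifies learner (fun n => σ.getD n x) (insert x {y | y ∈ σ}) := by
  rintro ⟨N, hN⟩
  have hlocked : learner ((List.range (σ.length + N)).map fun n => σ.getD n x) = L := by
    rw [map_range_getD_add]
    exact hσ _ fun y hy => (List.eq_of_mem_replicate hy) ▸ hx
  apply hL
  rw [← hlocked, hN _ (Nat.le_add_left _ _)]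
  exact σ.finite_toSet.insert x

def diagonalChain (τ : List X → List X) (f : ℕ → X) : ℕ → List X
  | 0 => []
  | k + 1 => diagonalChain τ f k ++ τ (diagonalChain τ f k) ++ [f k]

section diagonalChain

variable (τ : List X → List X) (f : ℕ → X)

theorem diagonalChain_succ_eq (k : ℕ) :
    diagonalChain τ f (k + 1) = diagonalChain τ f k ++ τ (diagonalChain τ f k) ++ [f k] := rfl

theorem le_length_diagonalChain (k : ℕ) : k ≤ (diagonalChain τ f k).length := by
  induction k with
  | zero => simp
  | succ k ih =>
    simp only [diagonalChain_succ_eq, List.length_append, List.length_singleton]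
    omega

theorem diagonalChain_isPrefix_succ (k : ℕ) :
    diagonalChain τ f k ++ τ (diagonalChain τ f k) <+: diagonalChain τ f (k + 1) :=
  List.prefix_append _ _

theorem mem_diagonalChain {L : Set X} (hτ : ∀ σ, ∀ x ∈ τ σ, x ∈ L) (hf : ∀ k, f k ∈ L) :
    ∀ k, ∀ x ∈ diagonalChain τ f k, x ∈ L
  | 0 => by simp [diagonalChain]
  | k + 1 => by
    simp only [diagonalChain_succ_eq, List.mem_append, List.mem_singleton]
    rintro x ((hx | hx) | rfl)
    exacts [mem_diagonalChain hτ hf k x hx, hτ _ x hx, hf k]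

end diagonalChain

theorem exists_not_identifies_of_not_exists_isLockingSeq (learner : List X → Set X) (f : ℕ → X)
    (h : ¬ ∃ σ, IsLockingSeq learner (Set.range f) σ) :
    ∃ E : ℕ → X, Set.range E = Set.range f ∧ ¬ Identifies learner E (Set.range f) := by
  have hblock : ∀ σ, ∃ τ, (∀ x ∈ τ, x ∈ Set.range f) ∧ learner (σ ++ τ) ≠ Set.range f := by
    simpa [IsLockingSeq] using h
  choose τ hτ hτ_ne using hblock
  obtain ⟨E, hE, hrange⟩ := exists_seq_of_isPrefix_succ (diagonalChain τ f)
    (fun k => (List.prefix_append _ _).trans (diagonalChain_isPrefix_succ τ f k))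
    (fun n => ⟨n + 1, le_length_diagonalChain τ f (n + 1)⟩)
  refine ⟨E, hrange.trans (subset_antisymm ?_ ?_), ?_⟩
  · rintro x ⟨k, hx⟩
    exact mem_diagonalChain τ f hτ Set.mem_range_self k x hx
  · rintro x ⟨k, rfl⟩
    exact ⟨k + 1, by simp [diagonalChain_succ_eq]⟩
  · rintro ⟨N, hN⟩
    have hprefix := map_range_length_of_isPrefix (hE (N + 1)) (diagonalChain_isPrefix_succ τ f N)
    refine hτ_ne (diagonalChain τ f N) (hprefix ▸ hN _ ?_)
    simpa using (le_length_diagonalChain τ f N).trans (Nat.le_add_right _ _)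

end Gold

/-- Gold: a class containing all finite languages and at least
one infinite language that admits a positive presentation is not identifiable
in the limit from positive examples. -/
theorem stmt_8 {X : Type} (C : Set (Set X))
    (hfin : ∀ L : Set X, L.Finite → L ∈ C)
    (Linf : Set X) (hinf : Linf ∈ C) (hInfinite : Linf.Infinite)
    (hpres : ∃ f : ℕ → X, Set.range f = Linf) :
    ∀ learner : List X → Set X,
      ∃ L ∈ C, ∃ E : ℕ → X,
        Set.range E = L ∧
        ¬ ∃ N : ℕ, ∀ n ≥ N, learner ((List.range n).map E) = L := by
  intro learner
  obtain ⟨f, rfl⟩ := hpres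
  by_cases hlock : ∃ σ, IsLockingSeq learner (Set.range f) σ
  · obtain ⟨σ, hσ⟩ := hlock
    exact ⟨_, hfin _ (σ.finite_toSet.insert (f 0)), _, range_getD σ (f 0),
      hσ.not_identifies hInfinite (Set.mem_range_self 0)⟩
  · exact ⟨_, hinf, exists_not_identifies_of_not_exists_isLockingSeq learner f hlock⟩
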